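/- arXiv:2102.02962 — 3 statements merged into one kernel-verified Lean document; each statement's English description precedes it below -/
import Mathlib

section
/- (Gagliardo–Nirenberg inequality on ℝ.) Let 1 ≤ m, r and q be exponents with q ∈ [r, ∞) if m = 1 and q ∈ [r, ∞] if m > 1, and set θ = (1/r − 1/q)·(1/r − 1/m + 1)^{−1}. Then there exists a constant C > 0 depending only on q and r such that for every f ∈ W^{1,m}(ℝ) ∩ L^r(ℝ), ‖f‖_{L^q(ℝ)} ≤ C ‖f‖_{L^r(ℝ)}^{1−θ} ‖f'‖_{L^m(ℝ)}^{θ}. -/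
open MeasureTheory ENNReal

/-!
Put `a = r (1 - 1/m)` and `s = 1 + a`. The derivative of `|f|^s` is bounded by `s |f|^a |f'|`,
and `f ∈ L^r` takes arbitrarily small values, so the fundamental theorem of calculus gives
`‖f‖_∞^s ≤ s ‖|f|^a f'‖_1`. Hölder's inequality with the exponents `m' = m/(m-1)` and `m`, where
`a m' = r`, bounds this by `s ‖f‖_r^a ‖f'‖_m`. Interpolating
`‖f‖_q ≤ ‖f‖_∞^(1 - r/q) ‖f‖_r^(r/q)` yields the inequality with `θ = (1 - r/q)/s` and `C = s^θ`.
-/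

theorem one_sub_one_div_nonneg {m : ℝ} (hm : 1 ≤ m) : 0 ≤ 1 - 1 / m :=
  sub_nonneg.2 (div_le_one_of_le₀ hm (zero_le_one.trans hm))

theorem mul_toReal_inv_le_one_of_ofReal_le {r : ℝ} (hr : 0 < r) {q : ℝ≥0∞}
    (hrq : ENNReal.ofReal r ≤ q) : r * q⁻¹.toReal ≤ 1 := by
  calc r * q⁻¹.toReal ≤ r * (ENNReal.ofReal r)⁻¹.toReal := by
        gcongr
        simpa using hr
    _ = 1 := by rw [ENNReal.toReal_inv, ENNReal.toReal_ofReal hr.le, mul_inv_cancel₀ hr.ne']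

section Measure

variable {α E : Type*} [MeasurableSpace α] {μ : Measure α} [NormedAddCommGroup E]

theorem MeasureTheory.MemLp.exists_norm_lt {f : α → E} {p : ℝ≥0∞} (hf : MemLp f p μ)
    (hp0 : p ≠ 0) (hp : p ≠ ∞) (hμ : μ Set.univ = ∞) {ε : ℝ} (hε : 0 < ε) :
    ∃ x, ‖f x‖ < ε := by
  by_contra! h
  have hfin : μ {x | ε ≤ ‖f x‖} < ∞ := by
    simpa using hf.meas_ge_lt_top' hp0 hp (ε := ENNReal.ofReal ε) (by simpa using hε)
  have huniv : {x | ε ≤ ‖f x‖} = Set.univ := Set.eq_univ_of_forall h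
  rw [huniv, hμ] at hfin
  exact lt_irrefl _ hfin

theorem eLpNorm_le_eLpNormEssSup_rpow_mul_eLpNorm_rpow {f : α → E}
    (hf : AEStronglyMeasurable f μ) {r : ℝ} (hr : 0 < r) {q : ℝ≥0∞}
    (hrq : ENNReal.ofReal r ≤ q) :
    eLpNorm f q μ ≤ eLpNormEssSup f μ ^ (1 - r * q⁻¹.toReal) *
      eLpNorm f (ENNReal.ofReal r) μ ^ (r * q⁻¹.toReal) := by
  rcases eq_or_ne q ∞ with rfl | hq
  · simp
  set S := eLpNormEssSup f μ
  set t := q.toReal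
  have hq0 : q ≠ 0 := ((ENNReal.ofReal_pos.2 hr).trans_le hrq).ne'
  have ht : 0 < t := ENNReal.toReal_pos hq0 hq
  have hrt : r ≤ t := by simpa [hr.le] using ENNReal.toReal_mono hq hrq
  have hpow : ∫⁻ x, ‖f x‖ₑ ^ t ∂μ ≤ S ^ (t - r) * eLpNorm' f r μ ^ r := by
    rw [← lintegral_rpow_enorm_eq_rpow_eLpNorm' hr,
      ← lintegral_const_mul'' _ (hf.enorm.pow_const r)]
    refine lintegral_mono_ae ?_
    filter_upwards [ae_le_eLpNormEssSup (f := f)] with x hx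
    calc ‖f x‖ₑ ^ t = ‖f x‖ₑ ^ (t - r) * ‖f x‖ₑ ^ r := by
          rw [← ENNReal.rpow_add_of_nonneg _ _ (by linarith) hr.le, sub_add_cancel]
      _ ≤ S ^ (t - r) * ‖f x‖ₑ ^ r := by gcongr
  rw [eLpNorm_eq_eLpNorm' hq0 hq, eLpNorm_eq_eLpNorm' (by simpa using hr) ofReal_ne_top,
    ENNReal.toReal_ofReal hr.le, eLpNorm'_eq_lintegral_enorm, ENNReal.toReal_inv]
  calc (∫⁻ x, ‖f x‖ₑ ^ t ∂μ) ^ (1 / t) ≤ (S ^ (t - r) * eLpNorm' f r μ ^ r) ^ (1 / t) := by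
        gcongr
    _ = S ^ (1 - r * t⁻¹) * eLpNorm' f r μ ^ (r * t⁻¹) := by
        rw [ENNReal.mul_rpow_of_nonneg _ _ (by positivity), ← ENNReal.rpow_mul, ← ENNReal.rpow_mul]
        congr 2 <;> field_simp

theorem eLpNorm_norm_rpow_le {f : α → E} {r c : ℝ} (hr : 0 < r) (hc : 0 ≤ c) :
    eLpNorm (fun x => ‖f x‖ ^ (r * c)) (ENNReal.ofReal c)⁻¹ μ ≤
      eLpNorm f (ENNReal.ofReal r) μ ^ (r * c) := by
  rcases hc.eq_or_lt with rfl | hc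
  · simpa using eLpNormEssSup_le_of_ae_bound (μ := μ) (f := fun _ => (1 : ℝ)) (C := 1)
      (ae_of_all _ fun _ => by simp)
  rw [eLpNorm_norm_rpow _ (by positivity), ← ENNReal.ofReal_inv_of_pos hc,
    ← ENNReal.ofReal_mul (by positivity), show c⁻¹ * (r * c) = r by field_simp]

theorem eLpNorm_norm_rpow_mul_le {f : α → E} {g : α → ℝ} {m r : ℝ} (hm : 1 ≤ m) (hr : 0 < r)
    (hf : AEStronglyMeasurable f μ) (hg : AEStronglyMeasurable g μ) :
    eLpNorm (fun x => ‖f x‖ ^ (r * (1 - 1 / m)) * g x) 1 μ ≤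
      eLpNorm f (ENNReal.ofReal r) μ ^ (r * (1 - 1 / m)) * eLpNorm g (ENNReal.ofReal m) μ := by
  have hm0 : 0 < m := by linarith
  have hc := one_sub_one_div_nonneg hm
  have : ENNReal.HolderTriple (ENNReal.ofReal (1 - 1 / m))⁻¹ (ENNReal.ofReal m) 1 :=
    ⟨by rw [inv_inv, inv_one, ← ENNReal.ofReal_inv_of_pos hm0, ← ENNReal.ofReal_add hc
      (by positivity), one_div, sub_add_cancel, ENNReal.ofReal_one]⟩
  calc _ ≤ 1 * eLpNorm (fun x => ‖f x‖ ^ (r * (1 - 1 / m))) (ENNReal.ofReal (1 - 1 / m))⁻¹ μ *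
        eLpNorm g (ENNReal.ofReal m) μ :=
        eLpNorm_le_eLpNorm_mul_eLpNorm'_of_norm
          (hf.norm.aemeasurable.pow_const _).aestronglyMeasurable hg (· * ·) 1
          (ae_of_all _ fun x => by simp [norm_mul])
    _ ≤ _ := by
        rw [one_mul]
        gcongr
        exact eLpNorm_norm_rpow_le hr hc

end Measure

theorem norm_sub_le_integral_norm_of_hasDerivAt {F : Type*} [NormedAddCommGroup F]
    [NormedSpace ℝ F] [CompleteSpace F] {f f' : ℝ → F} (hf : ∀ x, HasDerivAt f (f' x) x)
    (hf' : Integrable f') (a b : ℝ) : ‖f b - f a‖ ≤ ∫ x, ‖f' x‖ := by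
  rw [← intervalIntegral.integral_eq_sub_of_hasDerivAt (fun x _ => hf x) hf'.intervalIntegrable]
  calc _ ≤ ∫ x in Set.uIoc a b, ‖f' x‖ := intervalIntegral.norm_integral_le_integral_norm_uIoc
    _ ≤ ∫ x, ‖f' x‖ := setIntegral_le_integral hf'.norm (ae_of_all _ fun _ => norm_nonneg _)

theorem measurable_of_hasDerivAt {𝕜 F : Type*} [NontriviallyNormedField 𝕜] [MeasurableSpace 𝕜]
    [OpensMeasurableSpace 𝕜] [NormedAddCommGroup F] [NormedSpace 𝕜 F] [CompleteSpace F]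
    [MeasurableSpace F] [BorelSpace F] {f f' : 𝕜 → F} (hf : ∀ x, HasDerivAt f (f' x) x) :
    Measurable f' :=
  funext (fun x => (hf x).deriv) ▸ measurable_deriv f

theorem abs_rpow_le_abs_rpow_add_integral {f f' : ℝ → ℝ} {s : ℝ} (hs : 1 ≤ s)
    (hf : ∀ x, HasDerivAt f (f' x) x) (hg : Integrable fun x => |f x| ^ (s - 1) * f' x)
    (a b : ℝ) : |f b| ^ s ≤ |f a| ^ s + s * ∫ x, ‖|f x| ^ (s - 1) * f' x‖ := by
  rcases hs.eq_or_lt with rfl | hs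
  · simp only [sub_self, Real.rpow_zero, one_mul, Real.rpow_one] at hg ⊢
    have hftc := norm_sub_le_integral_norm_of_hasDerivAt hf hg a b
    rw [Real.norm_eq_abs] at hftc
    linarith [abs_sub_abs_le_abs_sub (f b) (f a)]
  have hF : ∀ x, HasDerivAt (fun x => |f x| ^ s) (s * |f x| ^ (s - 2) * f x * f' x) x :=
    fun x => (hasDerivAt_abs_rpow (f x) hs).comp x (hf x)
  have hF' : ∀ x, ‖s * |f x| ^ (s - 2) * f x * f' x‖ = s * ‖|f x| ^ (s - 1) * f' x‖ := by
    intro x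
    have : |f x| ^ (s - 1) = |f x| ^ (s - 2) * |f x| := by
      rw [← Real.rpow_add_one' (abs_nonneg _) (by linarith)]; ring_nf
    simp only [norm_mul, Real.norm_eq_abs, abs_abs, this, abs_of_pos (by linarith : 0 < s),
      abs_of_nonneg (Real.rpow_nonneg (abs_nonneg (f x)) _)]
    ring
  have hFi : Integrable fun x => s * |f x| ^ (s - 2) * f x * f' x :=
    (hg.norm.const_mul s).mono' (measurable_of_hasDerivAt hF).aestronglyMeasurable
      (ae_of_all _ fun x => (hF' x).le)
  have := (Real.le_norm_self _).trans (norm_sub_le_integral_norm_of_hasDerivAt hF hFi a b)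
  simp only [hF', integral_const_mul] at this
  linarith

theorem eLpNormEssSup_rpow_le_eLpNorm_abs_rpow_mul_deriv {f f' : ℝ → ℝ} {p : ℝ≥0∞} {s : ℝ}
    (hs : 1 ≤ s) (hf : ∀ x, HasDerivAt f (f' x) x) (hfp : MemLp f p) (hp0 : p ≠ 0) (hp : p ≠ ∞) :
    eLpNormEssSup f volume ^ s ≤
      ENNReal.ofReal s * eLpNorm (fun x => |f x| ^ (s - 1) * f' x) 1 volume := by
  set g := fun x => |f x| ^ (s - 1) * f' x
  have hs0 : 0 < s := by linarith
  have hfc : Continuous f := continuous_iff_continuousAt.2 fun x => (hf x).continuousAt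
  have hgm : AEStronglyMeasurable g volume :=
    ((hfc.measurable.abs.pow_const (s - 1)).mul (measurable_of_hasDerivAt hf)).aestronglyMeasurable
  rcases eq_or_ne (eLpNorm g 1 volume) ∞ with hg | hg
  · rw [hg, ENNReal.mul_top (by simpa using hs0)]
    exact le_top
  have hgi : Integrable g := memLp_one_iff_integrable.1 ⟨hgm, hg.lt_top⟩
  have hbound : ∀ b, |f b| ^ s ≤ s * ∫ x, ‖g x‖ := by
    intro b
    refine le_of_forall_pos_le_add fun δ hδ => ?_
    obtain ⟨a, ha⟩ := hfp.exists_norm_lt hp0 hp Real.volume_univ (Real.rpow_pos_of_pos hδ s⁻¹)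
    have hfa : |f a| ^ s < δ :=
      calc |f a| ^ s < (δ ^ s⁻¹) ^ s := Real.rpow_lt_rpow (abs_nonneg _) ha hs0
        _ = δ := Real.rpow_inv_rpow hδ.le hs0.ne'
    linarith [abs_rpow_le_abs_rpow_add_integral hs hf hgi a b]
  calc eLpNormEssSup f volume ^ s = eLpNormEssSup (fun x => ‖f x‖ ^ s) volume := by
        rw [← eLpNorm_exponent_top, ← eLpNorm_exponent_top, eLpNorm_norm_rpow _ hs0,
          top_mul (by simpa using hs0)]
    _ ≤ ENNReal.ofReal (s * ∫ x, ‖g x‖) :=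
        eLpNormEssSup_le_of_ae_bound (ae_of_all _ fun b => by
          simpa [abs_of_nonneg (Real.rpow_nonneg (abs_nonneg (f b)) s)] using hbound b)
    _ = ENNReal.ofReal s * eLpNorm g 1 volume := by
        rw [ENNReal.ofReal_mul hs0.le, ofReal_integral_norm_eq_lintegral_enorm hgi,
          eLpNorm_one_eq_lintegral_enorm]

theorem eLpNormEssSup_rpow_le_eLpNorm_rpow_mul_eLpNorm_deriv {f f' : ℝ → ℝ} {m r : ℝ}
    (hm : 1 ≤ m) (hr : 0 < r) (hf : ∀ x, HasDerivAt f (f' x) x)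
    (hfr : MemLp f (ENNReal.ofReal r)) (hf' : MemLp f' (ENNReal.ofReal m)) :
    eLpNormEssSup f volume ^ (1 + r * (1 - 1 / m)) ≤ ENNReal.ofReal (1 + r * (1 - 1 / m)) *
      (eLpNorm f (ENNReal.ofReal r) volume ^ (r * (1 - 1 / m)) *
        eLpNorm f' (ENNReal.ofReal m) volume) := by
  refine (eLpNormEssSup_rpow_le_eLpNorm_abs_rpow_mul_deriv
    (le_add_of_nonneg_right (mul_nonneg hr.le (one_sub_one_div_nonneg hm))) hf hfr
    (by simpa using hr) ofReal_ne_top).trans ?_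
  rw [add_sub_cancel_left]
  gcongr
  simpa only [Real.norm_eq_abs] using eLpNorm_norm_rpow_mul_le hm hr hfr.1 hf'.1

theorem gagliardo_nirenberg_R_general (m r : ℝ) (q : ℝ≥0∞) (hm : 1 ≤ m) (hr : 1 ≤ r)
    (hrq : ENNReal.ofReal r ≤ q) :
    ∃ C : ℝ, 0 < C ∧
      ∀ f f' : ℝ → ℝ, (∀ x, HasDerivAt f (f' x) x) →
        MemLp f (ENNReal.ofReal m) volume →
        MemLp f' (ENNReal.ofReal m) volume →
        MemLp f (ENNReal.ofReal r) volume →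
        eLpNorm f q volume ≤
          ENNReal.ofReal C *
            eLpNorm f (ENNReal.ofReal r) volume ^
              (1 - (1 / r - (1 / q).toReal) / (1 / r - 1 / m + 1)) *
            eLpNorm f' (ENNReal.ofReal m) volume ^
              ((1 / r - (1 / q).toReal) / (1 / r - 1 / m + 1)) := by
  have hr0 : 0 < r := by linarith
  set a := r * (1 - 1 / m)
  have ha : 0 ≤ a := mul_nonneg hr0.le (one_sub_one_div_nonneg hm)
  set θ := (1 - r * q⁻¹.toReal) / (1 + a)
  have hθ : (1 / r - (1 / q).toReal) / (1 / r - 1 / m + 1) = θ := by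
    rw [one_div q]
    simp only [θ, a]
    field_simp
    ring
  have hθ0 : 0 ≤ θ :=
    div_nonneg (by linarith [mul_toReal_inv_le_one_of_ofReal_le hr0 hrq]) (by linarith)
  have hexp : 1 - θ = a * θ + r * q⁻¹.toReal := by
    simp only [θ]
    field_simp
    ring
  refine ⟨(1 + a) ^ θ, by positivity, fun f f' hf _ hf' hfr => ?_⟩
  set R := eLpNorm f (ENNReal.ofReal r) volume
  set M := eLpNorm f' (ENNReal.ofReal m) volume
  rw [hθ]
  calc eLpNorm f q volume
      ≤ eLpNormEssSup f volume ^ (1 - r * q⁻¹.toReal) * R ^ (r * q⁻¹.toReal) :=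
        eLpNorm_le_eLpNormEssSup_rpow_mul_eLpNorm_rpow hfr.1 hr0 hrq
    _ = (eLpNormEssSup f volume ^ (1 + a)) ^ θ * R ^ (r * q⁻¹.toReal) := by
        rw [← ENNReal.rpow_mul]
        congr 2
        simp only [θ]
        field_simp
    _ ≤ (ENNReal.ofReal (1 + a) * (R ^ a * M)) ^ θ * R ^ (r * q⁻¹.toReal) := by
        gcongr
        exact eLpNormEssSup_rpow_le_eLpNorm_rpow_mul_eLpNorm_deriv hm hr0 hf hfr hf'
    _ = ENNReal.ofReal ((1 + a) ^ θ) * R ^ (1 - θ) * M ^ θ := by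
        rw [hexp, ENNReal.rpow_add_of_nonneg _ _ (by positivity) (by positivity),
          ENNReal.mul_rpow_of_nonneg _ _ hθ0, ENNReal.mul_rpow_of_nonneg _ _ hθ0,
          ENNReal.ofReal_rpow_of_nonneg (by linarith) hθ0, ← ENNReal.rpow_mul]
        ring

/-- **Gagliardo–Nirenberg inequality on ℝ.**  For exponents `1 ≤ m`, `1 ≤ r`,
`r ≤ q`, with `q < ∞` required when `m = 1`, and
`θ = (1/r − 1/q) (1/r − 1/m + 1)⁻¹`, there is a constant `C > 0` such that every
`f ∈ W^{1,m}(ℝ) ∩ L^r(ℝ)` (with classical derivative `f'`) satisfies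
`‖f‖_{L^q} ≤ C ‖f‖_{L^r}^{1−θ} ‖f'‖_{L^m}^{θ}`. -/
theorem gagliardo_nirenberg_R (m r : ℝ) (q : ℝ≥0∞) (hm : 1 ≤ m) (hr : 1 ≤ r)
    (hrq : ENNReal.ofReal r ≤ q) (hq_top : m = 1 → q ≠ ∞) :
    ∃ C : ℝ, 0 < C ∧
      ∀ f f' : ℝ → ℝ, (∀ x, HasDerivAt f (f' x) x) →
        MemLp f (ENNReal.ofReal m) volume →
        MemLp f' (ENNReal.ofReal m) volume →
        MemLp f (ENNReal.ofReal r) volume →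
        eLpNorm f q volume ≤
          ENNReal.ofReal C *
            eLpNorm f (ENNReal.ofReal r) volume ^
              (1 - (1 / r - (1 / q).toReal) / (1 / r - 1 / m + 1)) *
            eLpNorm f' (ENNReal.ofReal m) volume ^
              ((1 / r - (1 / q).toReal) / (1 / r - 1 / m + 1)) :=
  gagliardo_nirenberg_R_general m r q hm hr hrq
end

section
/- Let γ > 1, ρ̄ ≥ 1, E > 0. Suppose ρ : ℝ → [0,∞) is measurable with ∫_ℝ Φ(ρ(x)) dx ≤ E, where Φ(ρ) = (ρ^γ − ρ̄^γ − γ ρ̄^{γ−1}(ρ − ρ̄))/(γ − 1), and u ∈ H¹(ℝ) satisfies ∫_ℝ ρ u² dx ≤ E. Then there is a constant C depending only on γ, ρ̄ and E such that ‖u‖_{L²(ℝ)}² ≤ C(1 + ‖u_x‖_{L²(ℝ)}²), and consequently ‖u‖_{L^∞(ℝ)} ≤ C(1 + ‖u_x‖_{L²(ℝ)}). -/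
/-!
Where `ρ < 1/2` the potential energy is at least `Φ(1/2) > 0` (`Φ` is convex with minimum at `ρ̄`),
so by Chebyshev that set has measure at most `M = E / Φ(1/2)`, while off it `u² ≤ 2ρu²`, whose
integral is at most `2E`. Pointwise, `u(x)² = -∫_x^∞ (u²)' ≤ ‖u‖²/ε + ε‖u_x‖²` (Agmon's inequality,
using `u² → 0` at infinity). Taking `ε = 2M` bounds the contribution of the low-density set by
`‖u‖²/2 + 2M²‖u_x‖²`, which gives the `L²` bound after absorbing `‖u‖²/2`; with `ε = 1` the same
pointwise inequality gives the `L^∞` bound.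
-/

open MeasureTheory

/-- The potential energy `Φ(ρ) = (ρ^γ − ρ̄^γ − γ ρ̄^{γ−1}(ρ − ρ̄))/(γ − 1)`. -/
noncomputable def potentialEnergy (γ ρbar ρ : ℝ) : ℝ :=
  (ρ ^ γ - ρbar ^ γ - γ * ρbar ^ (γ - 1) * (ρ - ρbar)) / (γ - 1)

open Set Filter

section Tangent

variable {γ a b : ℝ}

theorem rpow_tangent_lt (hγ : 1 < γ) (ha : 0 < a) (hb : 0 ≤ b) (hne : b ≠ a) :
    a ^ γ + γ * a ^ (γ - 1) * (b - a) < b ^ γ := by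
  have hbern := one_add_mul_self_lt_rpow_one_add (s := b / a - 1)
    (by linarith [div_nonneg hb ha.le]) (by rwa [sub_ne_zero, ne_eq, div_eq_one_iff_eq ha.ne'])
    hγ
  rw [add_sub_cancel, Real.div_rpow hb ha.le, lt_div_iff₀ (by positivity)] at hbern
  calc a ^ γ + γ * a ^ (γ - 1) * (b - a) = (1 + γ * (b / a - 1)) * a ^ γ := by
        rw [Real.rpow_sub ha, Real.rpow_one]; field_simp
    _ < b ^ γ := hbern

theorem rpow_tangent_le (hγ : 1 ≤ γ) (ha : 0 < a) (hb : 0 ≤ b) :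
    a ^ γ + γ * a ^ (γ - 1) * (b - a) ≤ b ^ γ := by
  rcases hγ.eq_or_lt with rfl | hγ
  · simp
  rcases eq_or_ne b a with rfl | hne
  · simp
  exact (rpow_tangent_lt hγ ha hb hne).le

end Tangent

section PotentialEnergy

variable {γ ρbar ρ : ℝ}

theorem potentialEnergy_pos (hγ : 1 < γ) (hρbar : 0 < ρbar) (hρ : 0 ≤ ρ) (hne : ρ ≠ ρbar) :
    0 < potentialEnergy γ ρbar ρ :=
  div_pos (by linarith [rpow_tangent_lt hγ hρbar hρ hne]) (by linarith)

theorem potentialEnergy_nonneg (hγ : 1 < γ) (hρbar : 0 < ρbar) (hρ : 0 ≤ ρ) :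
    0 ≤ potentialEnergy γ ρbar ρ :=
  div_nonneg (by linarith [rpow_tangent_le hγ.le hρbar hρ]) (by linarith)

theorem potentialEnergy_antitoneOn (hγ : 1 < γ) :
    AntitoneOn (potentialEnergy γ ρbar) (Icc 0 ρbar) := by
  intro a ha b hb hab
  rcases hb.1.eq_or_lt with rfl | hb0
  · rw [le_antisymm hab ha.1]
  have htangent := rpow_tangent_le hγ.le hb0 ha.1
  have hslope : γ * b ^ (γ - 1) * (b - a) ≤ γ * ρbar ^ (γ - 1) * (b - a) := by
    gcongr
    exact hb.2
  unfold potentialEnergy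
  gcongr ?_ / _
  linarith

end PotentialEnergy

section LowDensity

variable {α : Type*} {γ ρbar θ : ℝ} {ρ : α → ℝ}

theorem setOf_lt_subset_setOf_potentialEnergy_le (hγ : 1 < γ) (hθ : θ ≤ ρbar)
    (hρ : ∀ x, 0 ≤ ρ x) :
    {x | ρ x < θ} ⊆ {x | potentialEnergy γ ρbar θ ≤ potentialEnergy γ ρbar (ρ x)} :=
  fun x hx => potentialEnergy_antitoneOn hγ ⟨hρ x, hx.le.trans hθ⟩
    ⟨(hρ x).trans hx.le, hθ⟩ (le_of_lt hx)

variable [MeasurableSpace α] {μ : Measure α}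

theorem measure_setOf_lt_lt_top (hγ : 1 < γ) (hθ0 : 0 ≤ θ) (hθ : θ < ρbar)
    (hρ : ∀ x, 0 ≤ ρ x) (hΦ : Integrable (fun x => potentialEnergy γ ρbar (ρ x)) μ) :
    μ {x | ρ x < θ} < ⊤ :=
  (measure_mono (setOf_lt_subset_setOf_potentialEnergy_le hγ hθ.le hρ)).trans_lt
    (hΦ.measure_ge_lt_top (potentialEnergy_pos hγ (hθ0.trans_lt hθ) hθ0 hθ.ne))

theorem potentialEnergy_mul_measureReal_setOf_lt_le (hγ : 1 < γ) (hθ0 : 0 ≤ θ) (hθ : θ < ρbar)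
    (hρ : ∀ x, 0 ≤ ρ x) (hΦ : Integrable (fun x => potentialEnergy γ ρbar (ρ x)) μ) :
    potentialEnergy γ ρbar θ * μ.real {x | ρ x < θ} ≤ ∫ x, potentialEnergy γ ρbar (ρ x) ∂μ := by
  have hρbar : 0 < ρbar := hθ0.trans_lt hθ
  have hpos := potentialEnergy_pos hγ hρbar hθ0 hθ.ne
  calc potentialEnergy γ ρbar θ * μ.real {x | ρ x < θ}
      ≤ potentialEnergy γ ρbar θ *
          μ.real {x | potentialEnergy γ ρbar θ ≤ potentialEnergy γ ρbar (ρ x)} :=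
        mul_le_mul_of_nonneg_left (measureReal_mono
          (setOf_lt_subset_setOf_potentialEnergy_le hγ hθ.le hρ)
          (hΦ.measure_ge_lt_top hpos).ne) hpos.le
    _ ≤ ∫ x, potentialEnergy γ ρbar (ρ x) ∂μ :=
        mul_meas_ge_le_integral_of_nonneg
          (Eventually.of_forall fun x => potentialEnergy_nonneg hγ hρbar (hρ x)) hΦ _

theorem integral_sq_le_measureReal_setOf_lt_mul_add {u : α → ℝ} {B : ℝ} (hρm : Measurable ρ)
    (hρ : ∀ x, 0 ≤ ρ x) (hθ : 0 < θ) (hfin : μ {x | ρ x < θ} < ⊤)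
    (hu : Integrable (fun x => u x ^ 2) μ) (hρu : Integrable (fun x => ρ x * u x ^ 2) μ)
    (hB : ∀ x, u x ^ 2 ≤ B) :
    ∫ x, u x ^ 2 ∂μ ≤ μ.real {x | ρ x < θ} * B + (∫ x, ρ x * u x ^ 2 ∂μ) / θ := by
  set A := {x | ρ x < θ}
  have hA : MeasurableSet A := measurableSet_lt hρm measurable_const
  have hlow : ∫ x in A, u x ^ 2 ∂μ ≤ μ.real A * B := by
    simpa using setIntegral_mono_on hu.integrableOn (integrableOn_const hfin.ne) hA
      (fun x _ => hB x)
  have hhigh : ∫ x in Aᶜ, u x ^ 2 ∂μ ≤ (∫ x, ρ x * u x ^ 2 ∂μ) / θ := by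
    rw [le_div_iff₀ hθ, ← integral_mul_const]
    calc ∫ x in Aᶜ, u x ^ 2 * θ ∂μ ≤ ∫ x in Aᶜ, ρ x * u x ^ 2 ∂μ :=
          setIntegral_mono_on (hu.mul_const θ).integrableOn hρu.integrableOn hA.compl
            fun x hx => by
              rw [mul_comm]
              gcongr
              simpa [A] using hx
      _ ≤ ∫ x, ρ x * u x ^ 2 ∂μ :=
          setIntegral_le_integral hρu (Eventually.of_forall fun x => by
            have := hρ x; positivity)
  linarith [integral_add_compl hA hu]

end LowDensity

theorem sq_le_integral_sq_div_add_mul_integral_deriv_sq {u : ℝ → ℝ} (hud : Differentiable ℝ u)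
    (hu : MemLp u 2 volume) (hu' : MemLp (deriv u) 2 volume) {ε : ℝ} (hε : 0 < ε) (x : ℝ) :
    u x ^ 2 ≤ (∫ y, u y ^ 2) / ε + ε * ∫ y, deriv u y ^ 2 := by
  have hderiv : ∀ y, HasDerivAt (fun y => u y ^ 2) (2 * u y * deriv u y) y := fun y => by
    simpa using (hud y).hasDerivAt.fun_pow 2
  have hprod : Integrable (fun y => 2 * u y * deriv u y) := by
    simpa only [mul_assoc, Pi.mul_apply] using (hu.integrable_mul hu').const_mul 2
  have hlim : Tendsto (fun y => u y ^ 2) atTop (nhds 0) :=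
    tendsto_zero_of_hasDerivAt_of_integrableOn_Ioi (a := x) (fun y _ => hderiv y)
      hprod.integrableOn hu.integrable_sq.integrableOn
  have hftc : ∫ y in Ioi x, 2 * u y * deriv u y = - u x ^ 2 := by
    rw [integral_Ioi_of_hasDerivAt_of_tendsto' (fun y _ => hderiv y) hprod.integrableOn hlim]
    ring
  have hamgm : ∀ y, -(2 * u y * deriv u y) ≤ u y ^ 2 / ε + ε * deriv u y ^ 2 := fun y => by
    rw [div_add' _ _ _ hε.ne', le_div_iff₀ hε]
    nlinarith [sq_nonneg (u y + ε * deriv u y)]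
  have hdom : Integrable (fun y => u y ^ 2 / ε + ε * deriv u y ^ 2) :=
    (hu.integrable_sq.div_const ε).add (hu'.integrable_sq.const_mul ε)
  calc u x ^ 2 = ∫ y in Ioi x, -(2 * u y * deriv u y) := by rw [integral_neg, hftc, neg_neg]
    _ ≤ ∫ y in Ioi x, (u y ^ 2 / ε + ε * deriv u y ^ 2) :=
        setIntegral_mono hprod.neg.integrableOn hdom.integrableOn hamgm
    _ ≤ ∫ y, (u y ^ 2 / ε + ε * deriv u y ^ 2) :=
        setIntegral_le_integral hdom (Eventually.of_forall fun y => by positivity)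
    _ = (∫ y, u y ^ 2) / ε + ε * ∫ y, deriv u y ^ 2 := by
        rw [integral_add (hu.integrable_sq.div_const ε) (hu'.integrable_sq.const_mul ε),
          integral_div, integral_const_mul]

theorem integral_sq_le_of_energy_le {γ ρbar θ E : ℝ} {ρ u : ℝ → ℝ} (hγ : 1 < γ) (hθ0 : 0 < θ)
    (hθ : θ < ρbar) (hE : 0 < E) (hρm : Measurable ρ) (hρ : ∀ x, 0 ≤ ρ x)
    (hΦ : Integrable (fun x => potentialEnergy γ ρbar (ρ x)))
    (hΦE : ∫ x, potentialEnergy γ ρbar (ρ x) ≤ E) (hud : Differentiable ℝ u)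
    (hu : MemLp u 2 volume) (hu' : MemLp (deriv u) 2 volume)
    (hρu : Integrable (fun x => ρ x * u x ^ 2)) (hρuE : ∫ x, ρ x * u x ^ 2 ≤ E) :
    ∫ x, u x ^ 2 ≤ 2 * E / θ + 4 * (E / potentialEnergy γ ρbar θ) ^ 2 * ∫ x, deriv u x ^ 2 := by
  set S := ∫ x, u x ^ 2
  set D := ∫ x, deriv u x ^ 2
  set M := E / potentialEnergy γ ρbar θ
  set m := volume.real {x | ρ x < θ}
  have hc := potentialEnergy_pos hγ (hθ0.trans hθ) hθ0.le hθ.ne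
  have hM : 0 < M := div_pos hE hc
  have hm : m ≤ M := by
    rw [le_div_iff₀ hc, mul_comm]
    exact (potentialEnergy_mul_measureReal_setOf_lt_le hγ hθ0.le hθ hρ hΦ).trans hΦE
  -- Agmon's inequality with `ε = 2M` makes the low-density contribution at most `S / 2`
  have hsplit := integral_sq_le_measureReal_setOf_lt_mul_add hρm hρ hθ0
    (measure_setOf_lt_lt_top hγ hθ0.le hθ hρ hΦ) hu.integrable_sq hρu
    (sq_le_integral_sq_div_add_mul_integral_deriv_sq hud hu hu' (by positivity : 0 < 2 * M))
  have hlow : m * (S / (2 * M) + 2 * M * D) ≤ S / 2 + 2 * M ^ 2 * D := by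
    calc m * (S / (2 * M) + 2 * M * D) ≤ M * (S / (2 * M) + 2 * M * D) := by
          gcongr
      _ = S / 2 + 2 * M ^ 2 * D := by field_simp
  have hhigh : (∫ x, ρ x * u x ^ 2) / θ ≤ E / θ := by gcongr
  rw [mul_div_assoc]
  linarith

theorem abs_le_mul_one_add_rpow_half {a C D : ℝ} (hC : 1 ≤ C) (hD : 0 ≤ D)
    (h : a ^ 2 ≤ C * (1 + D)) : |a| ≤ C * (1 + D ^ ((1 : ℝ) / 2)) := by
  rw [← Real.sqrt_eq_rpow]
  refine abs_le_of_sq_le_sq (h.trans ?_) (by positivity)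
  have hsqrt := Real.sq_sqrt hD
  calc C * (1 + D) ≤ C * (1 + √D) ^ 2 := by gcongr; nlinarith [Real.sqrt_nonneg D]
    _ ≤ C ^ 2 * (1 + √D) ^ 2 := by gcongr; nlinarith
    _ = (C * (1 + √D)) ^ 2 := by ring

/-- If `∫ Φ(ρ) ≤ E` and `∫ ρ u² ≤ E` with `u ∈ H¹(ℝ)`, then
`‖u‖_{L²}² ≤ C (1 + ‖u_x‖_{L²}²)` and `‖u‖_{L^∞} ≤ C (1 + ‖u_x‖_{L²})`,
where `C` depends only on `γ, ρ̄, E`. -/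
theorem velocity_L2_Linfty_bound (γ ρbar E : ℝ) (hγ : 1 < γ) (hρbar : 1 ≤ ρbar)
    (hE : 0 < E) :
    ∃ C : ℝ, 0 < C ∧
      ∀ (ρ u : ℝ → ℝ), Measurable ρ → (∀ x, 0 ≤ ρ x) →
        Integrable (fun x => potentialEnergy γ ρbar (ρ x)) →
        (∫ x : ℝ, potentialEnergy γ ρbar (ρ x)) ≤ E →
        Differentiable ℝ u →
        MemLp u 2 (volume : Measure ℝ) →
        MemLp (deriv u) 2 (volume : Measure ℝ) →
        Integrable (fun x => ρ x * u x ^ 2) →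
        (∫ x : ℝ, ρ x * u x ^ 2) ≤ E →
        ((∫ x : ℝ, u x ^ 2) ≤ C * (1 + ∫ x : ℝ, deriv u x ^ 2)) ∧
        (∀ x : ℝ, |u x| ≤ C * (1 + (∫ x : ℝ, deriv u x ^ 2) ^ ((1 : ℝ) / 2))) := by
  set M := E / potentialEnergy γ ρbar (1 / 2)
  refine ⟨4 * E + 4 * M ^ 2 + 1, by positivity, ?_⟩
  intro ρ u hρm hρ hΦ hΦE hud hu hu' hρu hρuE
  have hD : 0 ≤ ∫ x, deriv u x ^ 2 := integral_nonneg fun x => sq_nonneg _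
  have hL2 := integral_sq_le_of_energy_le (θ := 1 / 2) hγ (by norm_num) (by linarith) hE hρm hρ
    hΦ hΦE hud hu hu' hρu hρuE
  have hL2' : ∫ x, u x ^ 2 ≤ (4 * E + 4 * M ^ 2 + 1) * (1 + ∫ x, deriv u x ^ 2) := by
    have : 0 ≤ E * ∫ x, deriv u x ^ 2 := by positivity
    nlinarith
  refine ⟨hL2', fun x =>
    abs_le_mul_one_add_rpow_half (le_add_of_nonneg_left (by positivity)) hD ?_⟩
  have hagmon := sq_le_integral_sq_div_add_mul_integral_deriv_sq hud hu hu' one_pos x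
  rw [div_one, one_mul] at hagmon
  nlinarith
end

section
/- Let γ > 1, ρ̄ ≥ 1, E > 0. Suppose ρ : ℝ → [0,∞) and u : ℝ → ℝ are measurable with ∫_ℝ ρ u² dx ≤ E and ∫_ℝ Φ(ρ(x)) dx ≤ E, where Φ(ρ) = (ρ^γ − ρ̄^γ − γ ρ̄^{γ−1}(ρ − ρ̄))/(γ − 1). Then there is a constant C depending only on γ, ρ̄ and E such that ‖√ρ − √ρ̄‖_{L²(ℝ)} ≤ C, and consequently sup_{x∈ℝ} | ∫_{−∞}^{x} √ρ(y) u(y) (√ρ(y) − √ρ̄) dy | ≤ C. -/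
open MeasureTheory

/-!
By homogeneity, `Φ(ρ) = ρ̄^γ Φ₁(ρ/ρ̄)` where `Φ₁` is the potential energy with `ρ̄ = 1`, and
`(√ρ − √ρ̄)² = ρ̄ (√(ρ/ρ̄) − 1)²`. Writing `ρ/ρ̄ = t²`, the inequality `(√x − 1)² ≤ Φ₁(x)` is
Bernoulli's inequality `t^(2γ-1) ≥ 1 + (2γ - 1)(t - 1)` multiplied by `t`. Hence
`ρ̄^(γ-1) (√ρ − √ρ̄)² ≤ Φ(ρ)`, and for `ρ̄ ≥ 1` the energy bound controls `‖√ρ − √ρ̄‖²_{L²}`.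
The second estimate follows from `|√ρ u (√ρ − √ρ̄)| ≤ (ρ u² + (√ρ − √ρ̄)²) / 2`.
-/

open Real

lemma mul_sq_sub_le_rpow_add_one {p t : ℝ} (hp : 1 ≤ p) (ht : 0 ≤ t) :
    p * t ^ 2 - (p - 1) * t ≤ t ^ (p + 1) := by
  have bernoulli := one_add_mul_self_le_rpow_one_add (s := t - 1) (by linarith) hp
  rw [add_sub_cancel] at bernoulli
  rw [rpow_add_one' ht (by linarith)]
  nlinarith [mul_le_mul_of_nonneg_right bernoulli ht]

lemma sq_sqrt_sub_one_le_potentialEnergy_one {γ x : ℝ} (hγ : 1 < γ) (hx : 0 ≤ x) :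
    (√x - 1) ^ 2 ≤ potentialEnergy γ 1 x := by
  have key := mul_sq_sub_le_rpow_add_one (p := 2 * γ - 1) (by linarith) (sqrt_nonneg x)
  rw [sq_sqrt hx, show 2 * γ - 1 + 1 = 2 * γ by ring, rpow_mul (sqrt_nonneg x), rpow_two,
    sq_sqrt hx] at key
  rw [potentialEnergy, le_div_iff₀ (by linarith), one_rpow, one_rpow, mul_one]
  nlinarith [sq_sqrt hx]

lemma potentialEnergy_eq_rpow_mul_potentialEnergy_one {γ ρbar ρ : ℝ} (hρbar : 0 < ρbar)
    (hρ : 0 ≤ ρ) :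
    potentialEnergy γ ρbar ρ = ρbar ^ γ * potentialEnergy γ 1 (ρ / ρbar) := by
  simp only [potentialEnergy, div_rpow hρ hρbar.le, one_rpow, rpow_sub_one hρbar.ne']
  have : ρbar ^ γ ≠ 0 := (rpow_pos_of_pos hρbar γ).ne'
  field_simp

lemma rpow_sub_one_mul_sq_sqrt_sub_le_potentialEnergy {γ ρbar ρ : ℝ} (hγ : 1 < γ)
    (hρbar : 0 < ρbar) (hρ : 0 ≤ ρ) :
    ρbar ^ (γ - 1) * (√ρ - √ρbar) ^ 2 ≤ potentialEnergy γ ρbar ρ := by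
  have hscale : (√ρ - √ρbar) ^ 2 = ρbar * (√(ρ / ρbar) - 1) ^ 2 := by
    have : √ρbar ≠ 0 := (sqrt_pos.2 hρbar).ne'
    rw [sqrt_div' _ hρbar.le]
    field_simp
    rw [sq_sqrt hρbar.le, mul_comm]
  rw [potentialEnergy_eq_rpow_mul_potentialEnergy_one hρbar hρ, hscale, ← mul_assoc,
    ← rpow_add_one hρbar.ne', sub_add_cancel]
  exact mul_le_mul_of_nonneg_left
    (sq_sqrt_sub_one_le_potentialEnergy_one hγ (div_nonneg hρ hρbar.le)) (by positivity)

lemma sq_sqrt_sub_le_potentialEnergy {γ ρbar ρ : ℝ} (hγ : 1 < γ) (hρbar : 1 ≤ ρbar)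
    (hρ : 0 ≤ ρ) :
    (√ρ - √ρbar) ^ 2 ≤ potentialEnergy γ ρbar ρ :=
  (le_mul_of_one_le_left (sq_nonneg _) (one_le_rpow hρbar (by linarith))).trans
    (rpow_sub_one_mul_sq_sqrt_sub_le_potentialEnergy hγ (by linarith) hρ)

lemma abs_mul_le_add_sq_div_two (a b : ℝ) : |a * b| ≤ (a ^ 2 + b ^ 2) / 2 := by
  rw [abs_mul, ← sq_abs a, ← sq_abs b]
  linarith [two_mul_le_add_sq |a| |b|]

lemma abs_setIntegral_le_integral_of_abs_le {α : Type*} [MeasurableSpace α] {μ : Measure α}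
    {f g : α → ℝ} (s : Set α) (hg : Integrable g μ) (hfg : ∀ x, |f x| ≤ g x) :
    |∫ x in s, f x ∂μ| ≤ ∫ x, g x ∂μ := by
  rw [← Real.norm_eq_abs]
  exact (norm_integral_le_of_norm_le hg.integrableOn (ae_of_all _ hfg)).trans
    (setIntegral_le_integral hg (ae_of_all _ fun x => (abs_nonneg _).trans (hfg x)))

/-- If `∫ ρ u² ≤ E` and `∫ Φ(ρ) ≤ E`, then `‖√ρ − √ρ̄‖_{L²} ≤ C` and
`sup_x |∫_{−∞}^x √ρ u (√ρ − √ρ̄) dy| ≤ C`, with `C = C(γ, ρ̄, E)`. -/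
theorem sqrt_density_bound (γ ρbar E : ℝ) (hγ : 1 < γ) (hρbar : 1 ≤ ρbar)
    (hE : 0 < E) :
    ∃ C : ℝ, 0 < C ∧
      ∀ (ρ u : ℝ → ℝ), Measurable ρ → (∀ x, 0 ≤ ρ x) → Measurable u →
        Integrable (fun x => potentialEnergy γ ρbar (ρ x)) →
        (∫ x : ℝ, potentialEnergy γ ρbar (ρ x)) ≤ E →
        Integrable (fun x => ρ x * u x ^ 2) →
        (∫ x : ℝ, ρ x * u x ^ 2) ≤ E →
        Integrable (fun y => Real.sqrt (ρ y) * u y * (Real.sqrt (ρ y) - Real.sqrt ρbar)) →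
        ((∫ x : ℝ, (Real.sqrt (ρ x) - Real.sqrt ρbar) ^ 2) ^ ((1 : ℝ) / 2) ≤ C) ∧
        (∀ x : ℝ,
          |∫ y in Set.Iic x, Real.sqrt (ρ y) * u y * (Real.sqrt (ρ y) - Real.sqrt ρbar)| ≤ C) := by
  refine ⟨E + √E, by positivity, fun ρ u _ hρ _ hΦ hΦE hρu hρuE _ => ?_⟩
  have hpt (x : ℝ) : (√(ρ x) - √ρbar) ^ 2 ≤ potentialEnergy γ ρbar (ρ x) :=
    sq_sqrt_sub_le_potentialEnergy hγ hρbar (hρ x)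
  have hL2 : ∫ x, (√(ρ x) - √ρbar) ^ 2 ≤ E :=
    (integral_mono_of_nonneg (ae_of_all _ fun _ => sq_nonneg _) hΦ (ae_of_all _ hpt)).trans hΦE
  refine ⟨?_, fun x => ?_⟩
  · calc (∫ x, (√(ρ x) - √ρbar) ^ 2) ^ ((1 : ℝ) / 2)
        ≤ E ^ ((1 : ℝ) / 2) := rpow_le_rpow (integral_nonneg fun _ => sq_nonneg _) hL2 (by norm_num)
      _ = √E := (sqrt_eq_rpow E).symm
      _ ≤ E + √E := by linarith
  · calc |∫ y in Set.Iic x, √(ρ y) * u y * (√(ρ y) - √ρbar)|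
        ≤ ∫ y, (ρ y * u y ^ 2 + potentialEnergy γ ρbar (ρ y)) / 2 := by
          refine abs_setIntegral_le_integral_of_abs_le _ ((hρu.add hΦ).div_const 2) fun y => ?_
          refine (abs_mul_le_add_sq_div_two _ _).trans ?_
          rw [mul_pow, sq_sqrt (hρ y)]
          linarith [hpt y]
      _ = ((∫ y, ρ y * u y ^ 2) + ∫ y, potentialEnergy γ ρbar (ρ y)) / 2 := by
          rw [integral_div, integral_add hρu hΦ]
      _ ≤ E + √E := by linarith [sqrt_nonneg E]
end
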